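/- Let β > 0, τ > 0, K ≥ 0 and let N ≥ 1 be an integer. Let M_Ω ∈ ℝ^{n_Ω×n_Ω} and M_Γ ∈ ℝ^{n_Γ×n_Γ} be diagonal matrices with positive diagonal entries, and let L_Ω ∈ ℝ^{n_Ω×n_Ω} and L_Γ ∈ ℝ^{n_Γ×n_Γ} be symmetric positive semidefinite. Let U⁰, …, U^N, μ¹, …, μ^N ∈ ℝ^{n_Ω} and θ¹, …, θ^N ∈ ℝ^{n_Γ} satisfy, for each n ∈ {1, …, N}, the combined equation M_Ω(Uⁿ − Uⁿ⁻¹) + β⁻¹·ext(M_Γ(Uⁿ|_Γ − Uⁿ⁻¹|_Γ)) + τ·L_Ω·μⁿ + τ·β⁻¹·ext(L_Γ·θⁿ) = 0, together with the uniform bounds (Uⁿ)ᵀL_Ω Uⁿ ≤ K and (Uⁿ|_Γ)ᵀL_Γ(Uⁿ|_Γ) ≤ K for all n ∈ {0, …, N}, and τ·Σ_{n=1}^{N}(μⁿ)ᵀL_Ω μⁿ ≤ K and τ·Σ_{n=1}^{N}(θⁿ)ᵀL_Γ θⁿ ≤ K. Then there exists a constant C > 0, depending only on β, K and Nτ (and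 in particular independent of l, of the dimensions n_Γ, n_I and of τ), such that for every l ∈ {1, …, N}: τ·Σ_{k=0}^{N−l}(U^{k+l} − U^k)ᵀM_Ω(U^{k+l} − U^k) + τ·Σ_{k=0}^{N−l}(U^{k+l}|_Γ − U^k|_Γ)ᵀM_Γ(U^{k+l}|_Γ − U^k|_Γ) ≤ C·τ·l. -/

import Mathlib

open Matrix

/-- Restriction of a bulk vector (indexed by `Fin nΓ ⊕ Fin nI`, boundary
coordinates first) to its boundary coordinates. -/
def restrΓ {nΓ nI : ℕ} (v : Fin nΓ ⊕ Fin nI → ℝ) : Fin nΓ → ℝ := fun i => v (Sum.inl i)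

/-- Extension of a boundary vector by zero in the interior coordinates. -/
def extΩ {nΓ nI : ℕ} (x : Fin nΓ → ℝ) : Fin nΓ ⊕ Fin nI → ℝ := Sum.elim x 0

/-!
Combine the two lumped masses into the single diagonal weight `dΩ + β⁻¹ • extΩ dΓ`, so that the
scheme reads `M (Uⁿ - Uⁿ⁻¹) + τ Fⁿ = 0` with `Fⁿ = LΩ μⁿ + β⁻¹ ext(LΓ θⁿ)`. Summing over the
window `n = k+1, …, k+l` and testing with `W = U^{k+l} - U^k` gives
`Wᵀ M W = -τ ∑ₙ Wᵀ Fⁿ`. Young's inequality for the semidefinite forms bounds `-Wᵀ Fⁿ` by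
`2K(1 + β⁻¹)` (the energies of `W` are at most `4K`) plus half the dissipation
`μⁿᵀ LΩ μⁿ + β⁻¹ θⁿᵀ LΓ θⁿ`. Summing over `k`, every step `n` lies in at most `l` windows, so the
total is at most `l` times `τ ∑ₙ` of that bound, i.e. `l (1 + β⁻¹)(2KT + K/2)`; comparing
`M` with the unweighted masses costs a factor `max 1 β`.
-/

open Finset

namespace Matrix

variable {ι R : Type*} [Fintype ι]

lemma IsSymm.dotProduct_mulVec_comm [CommSemiring R] {L : Matrix ι ι R} (hL : L.IsSymm)
    (x y : ι → R) : x ⬝ᵥ L *ᵥ y = y ⬝ᵥ L *ᵥ x := by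
  rw [dotProduct_mulVec, ← mulVec_transpose, hL.eq, dotProduct_comm]

lemma dotProduct_mulVec_sub_add_dotProduct_mulVec_add [CommRing R] (L : Matrix ι ι R)
    (x y : ι → R) :
    (x - y) ⬝ᵥ L *ᵥ (x - y) + (x + y) ⬝ᵥ L *ᵥ (x + y)
      = 2 * (x ⬝ᵥ L *ᵥ x + y ⬝ᵥ L *ᵥ y) := by
  simp only [mulVec_add, mulVec_sub, dotProduct_add, add_dotProduct, dotProduct_sub,
    sub_dotProduct]
  ring

namespace PosSemidef

variable {L : Matrix ι ι ℝ}

lemma dotProduct_mulVec_self_nonneg (hL : L.PosSemidef) (x : ι → ℝ) : 0 ≤ x ⬝ᵥ L *ᵥ x := by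
  simpa using hL.dotProduct_mulVec_nonneg x

lemma two_mul_abs_dotProduct_mulVec_le (hL : L.PosSemidef) (x y : ι → ℝ) :
    2 * |x ⬝ᵥ L *ᵥ y| ≤ x ⬝ᵥ L *ᵥ x + y ⬝ᵥ L *ᵥ y := by
  have hsymm := (isHermitian_iff_isSymm.mp hL.isHermitian).dotProduct_mulVec_comm x y
  have hadd := hL.dotProduct_mulVec_self_nonneg (x + y)
  have hsub := hL.dotProduct_mulVec_self_nonneg (x - y)
  simp only [mulVec_add, mulVec_sub, dotProduct_add, add_dotProduct, dotProduct_sub,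
    sub_dotProduct] at hadd hsub
  cases abs_cases (x ⬝ᵥ L *ᵥ y) <;> linarith

lemma dotProduct_mulVec_sub_le (hL : L.PosSemidef) (x y : ι → ℝ) :
    (x - y) ⬝ᵥ L *ᵥ (x - y) ≤ 2 * (x ⬝ᵥ L *ᵥ x + y ⬝ᵥ L *ᵥ y) := by
  linarith [dotProduct_mulVec_sub_add_dotProduct_mulVec_add L x y,
    hL.dotProduct_mulVec_self_nonneg (x + y)]

end PosSemidef

lemma mulVec_sub_add_smul_sum_eq_zero [CommRing R] (M : Matrix ι ι R) (τ : R)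
    (U F : ℕ → ι → R) (k l : ℕ)
    (h : ∀ i < l, M *ᵥ (U (k + i + 1) - U (k + i)) + τ • F (k + i + 1) = 0) :
    M *ᵥ (U (k + l) - U k) + τ • ∑ i ∈ range l, F (k + i + 1) = 0 := by
  have htel : U (k + l) - U k = ∑ i ∈ range l, (U (k + i + 1) - U (k + i)) :=
    (sum_range_sub (fun i => U (k + i)) l).symm
  rw [htel, mulVec_sum, smul_sum, ← sum_add_distrib]
  exact sum_eq_zero fun i hi => h i (mem_range.mp hi)

end Matrix

lemma Finset.sum_range_sum_range_add_le {M : Type*} [AddCommMonoid M] [PartialOrder M]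
    [IsOrderedAddMonoid M] {g : ℕ → M} (hg : ∀ n, 0 ≤ g n) {l N : ℕ} (hl : l ≤ N) :
    ∑ k ∈ range (N - l + 1), ∑ i ∈ range l, g (k + i + 1) ≤ l • ∑ n ∈ Icc 1 N, g n := by
  rw [sum_comm]
  calc _ ≤ ∑ _i ∈ range l, ∑ n ∈ Icc 1 N, g n := sum_le_sum fun i hi => ?_
    _ = l • ∑ n ∈ Icc 1 N, g n := by rw [sum_const, card_range]
  refine (sum_map (range (N - l + 1)) (addRightEmbedding (i + 1)) g).symm.trans_le ?_
  refine sum_le_sum_of_subset_of_nonneg (fun n hn => ?_) fun n _ _ => hg n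
  simp only [mem_map, mem_range, addRightEmbedding_apply] at hn hi
  simp only [mem_Icc]
  omega

section BulkSurface

variable {nΓ nI : ℕ}

lemma restrΓ_sub (u v : Fin nΓ ⊕ Fin nI → ℝ) : restrΓ (u - v) = restrΓ u - restrΓ v := rfl

lemma dotProduct_extΩ (v : Fin nΓ ⊕ Fin nI → ℝ) (x : Fin nΓ → ℝ) :
    v ⬝ᵥ extΩ x = restrΓ v ⬝ᵥ x := by
  simp [extΩ, restrΓ, dotProduct, Fintype.sum_sum_type]

lemma diagonal_mulVec_add_smul_extΩ (c : ℝ) (dΩ : Fin nΓ ⊕ Fin nI → ℝ) (dΓ : Fin nΓ → ℝ)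
    (X : Fin nΓ ⊕ Fin nI → ℝ) :
    diagonal dΩ *ᵥ X + c • extΩ (diagonal dΓ *ᵥ restrΓ X)
      = diagonal (dΩ + c • extΩ dΓ) *ᵥ X := by
  ext (i | i) <;> simp [mulVec_diagonal, extΩ, restrΓ, add_mul, mul_assoc]

lemma dotProduct_diagonal_add_smul_extΩ_mulVec (c : ℝ) (dΩ : Fin nΓ ⊕ Fin nI → ℝ)
    (dΓ : Fin nΓ → ℝ) (X : Fin nΓ ⊕ Fin nI → ℝ) :
    X ⬝ᵥ diagonal (dΩ + c • extΩ dΓ) *ᵥ X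
      = X ⬝ᵥ diagonal dΩ *ᵥ X + c * (restrΓ X ⬝ᵥ diagonal dΓ *ᵥ restrΓ X) := by
  rw [← diagonal_mulVec_add_smul_extΩ, dotProduct_add, dotProduct_smul, dotProduct_extΩ,
    smul_eq_mul]

lemma add_le_max_one_mul_dotProduct_diagonal_mulVec {β : ℝ} (hβ : 0 < β)
    {dΩ : Fin nΓ ⊕ Fin nI → ℝ} {dΓ : Fin nΓ → ℝ} (hdΩ : 0 ≤ dΩ) (hdΓ : 0 ≤ dΓ)
    (X : Fin nΓ ⊕ Fin nI → ℝ) :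
    X ⬝ᵥ diagonal dΩ *ᵥ X + restrΓ X ⬝ᵥ diagonal dΓ *ᵥ restrΓ X
      ≤ max 1 β * (X ⬝ᵥ diagonal (dΩ + β⁻¹ • extΩ dΓ) *ᵥ X) := by
  rw [dotProduct_diagonal_add_smul_extΩ_mulVec]
  have hΩ := (PosSemidef.diagonal hdΩ).dotProduct_mulVec_self_nonneg X
  have hΓ := (PosSemidef.diagonal hdΓ).dotProduct_mulVec_self_nonneg (restrΓ X)
  have h1 : 1 ≤ max 1 β := le_max_left 1 β
  have hβ' : 1 ≤ max 1 β * β⁻¹ := by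
    rw [le_mul_inv_iff₀ hβ, one_mul]; exact le_max_right 1 β
  nlinarith

lemma diagonal_mulVec_add_smul_extΩ_add_smul (c τ : ℝ) (dΩ : Fin nΓ ⊕ Fin nI → ℝ)
    (dΓ : Fin nΓ → ℝ) (LΩ : Matrix (Fin nΓ ⊕ Fin nI) (Fin nΓ ⊕ Fin nI) ℝ)
    (LΓ : Matrix (Fin nΓ) (Fin nΓ) ℝ) (X m : Fin nΓ ⊕ Fin nI → ℝ) (t : Fin nΓ → ℝ) :
    diagonal dΩ *ᵥ X + c • extΩ (diagonal dΓ *ᵥ restrΓ X) + τ • LΩ *ᵥ m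
        + (τ * c) • extΩ (LΓ *ᵥ t)
      = diagonal (dΩ + c • extΩ dΓ) *ᵥ X + τ • (LΩ *ᵥ m + c • extΩ (LΓ *ᵥ t)) := by
  rw [diagonal_mulVec_add_smul_extΩ, smul_add, mul_smul, add_assoc]

lemma neg_dotProduct_mulVec_add_smul_extΩ_le {c : ℝ} (hc : 0 ≤ c)
    {LΩ : Matrix (Fin nΓ ⊕ Fin nI) (Fin nΓ ⊕ Fin nI) ℝ} (hLΩ : LΩ.PosSemidef)
    {LΓ : Matrix (Fin nΓ) (Fin nΓ) ℝ} (hLΓ : LΓ.PosSemidef)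
    (W m : Fin nΓ ⊕ Fin nI → ℝ) (t : Fin nΓ → ℝ) :
    -(W ⬝ᵥ (LΩ *ᵥ m + c • extΩ (LΓ *ᵥ t)))
      ≤ (W ⬝ᵥ LΩ *ᵥ W + m ⬝ᵥ LΩ *ᵥ m) / 2
        + c * ((restrΓ W ⬝ᵥ LΓ *ᵥ restrΓ W + t ⬝ᵥ LΓ *ᵥ t) / 2) := by
  rw [dotProduct_add, dotProduct_smul, dotProduct_extΩ, smul_eq_mul]
  have hΩ := hLΩ.two_mul_abs_dotProduct_mulVec_le W m
  have hΓ := hLΓ.two_mul_abs_dotProduct_mulVec_le (restrΓ W) t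
  have habsΩ := neg_abs_le (W ⬝ᵥ LΩ *ᵥ m)
  have habsΓ := mul_le_mul_of_nonneg_left (neg_abs_le (restrΓ W ⬝ᵥ LΓ *ᵥ t)) hc
  have hcΓ := mul_le_mul_of_nonneg_left hΓ hc
  linarith

end BulkSurface

section DiscreteScheme

variable {nΓ nI : ℕ} {β τ K : ℝ} {dΩ : Fin nΓ ⊕ Fin nI → ℝ} {dΓ : Fin nΓ → ℝ}
  {LΩ : Matrix (Fin nΓ ⊕ Fin nI) (Fin nΓ ⊕ Fin nI) ℝ} {LΓ : Matrix (Fin nΓ) (Fin nΓ) ℝ}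
  {U μ : ℕ → Fin nΓ ⊕ Fin nI → ℝ} {θ : ℕ → Fin nΓ → ℝ}

lemma dotProduct_diagonal_mulVec_translate_le (hβ : 0 < β) (hτ : 0 ≤ τ) (hLΩ : LΩ.PosSemidef)
    (hLΓ : LΓ.PosSemidef) {k l : ℕ}
    (heq : ∀ i < l, diagonal (dΩ + β⁻¹ • extΩ dΓ) *ᵥ (U (k + i + 1) - U (k + i))
      + τ • (LΩ *ᵥ μ (k + i + 1) + β⁻¹ • extΩ (LΓ *ᵥ θ (k + i + 1))) = 0)
    (hΩ : (U (k + l) - U k) ⬝ᵥ LΩ *ᵥ (U (k + l) - U k) ≤ 4 * K)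
    (hΓ : restrΓ (U (k + l) - U k) ⬝ᵥ LΓ *ᵥ restrΓ (U (k + l) - U k) ≤ 4 * K) :
    (U (k + l) - U k) ⬝ᵥ diagonal (dΩ + β⁻¹ • extΩ dΓ) *ᵥ (U (k + l) - U k)
      ≤ τ * ∑ i ∈ range l, (2 * K * (1 + β⁻¹) + (μ (k + i + 1) ⬝ᵥ LΩ *ᵥ μ (k + i + 1)
          + β⁻¹ * (θ (k + i + 1) ⬝ᵥ LΓ *ᵥ θ (k + i + 1))) / 2) := by
  set W := U (k + l) - U k
  have hβ' : 0 ≤ β⁻¹ := inv_nonneg.2 hβ.le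
  have henergy : W ⬝ᵥ diagonal (dΩ + β⁻¹ • extΩ dΓ) *ᵥ W
      = ∑ i ∈ range l, τ * -(W ⬝ᵥ (LΩ *ᵥ μ (k + i + 1) + β⁻¹ • extΩ (LΓ *ᵥ θ (k + i + 1)))) := by
    have h := congrArg (W ⬝ᵥ ·) <| mulVec_sub_add_smul_sum_eq_zero _ τ U
      (fun n => LΩ *ᵥ μ n + β⁻¹ • extΩ (LΓ *ᵥ θ n)) k l heq
    rw [dotProduct_add, dotProduct_smul, dotProduct_sum, dotProduct_zero, smul_eq_mul] at h
    simp only [mul_neg, sum_neg_distrib, ← mul_sum]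
    linarith
  rw [henergy, mul_sum]
  gcongr with i
  refine (neg_dotProduct_mulVec_add_smul_extΩ_le hβ' hLΩ hLΓ W _ _).trans ?_
  linarith [mul_le_mul_of_nonneg_left hΓ hβ']

lemma sum_translate_mass_le (hβ : 0 < β) (hτ : 0 ≤ τ) (hK : 0 ≤ K) {N l : ℕ} (hdΩ : 0 ≤ dΩ)
    (hdΓ : 0 ≤ dΓ) (hLΩ : LΩ.PosSemidef) (hLΓ : LΓ.PosSemidef)
    (heq : ∀ n, 1 ≤ n → n ≤ N → diagonal (dΩ + β⁻¹ • extΩ dΓ) *ᵥ (U n - U (n - 1))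
      + τ • (LΩ *ᵥ μ n + β⁻¹ • extΩ (LΓ *ᵥ θ n)) = 0)
    (hU : ∀ n ≤ N, U n ⬝ᵥ LΩ *ᵥ U n ≤ K)
    (hUΓ : ∀ n ≤ N, restrΓ (U n) ⬝ᵥ LΓ *ᵥ restrΓ (U n) ≤ K)
    (hμ : τ * ∑ n ∈ Icc 1 N, μ n ⬝ᵥ LΩ *ᵥ μ n ≤ K)
    (hθ : τ * ∑ n ∈ Icc 1 N, θ n ⬝ᵥ LΓ *ᵥ θ n ≤ K) (hlN : l ≤ N) :
    τ * ∑ k ∈ range (N - l + 1), (U (k + l) - U k) ⬝ᵥ diagonal dΩ *ᵥ (U (k + l) - U k)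
      + τ * ∑ k ∈ range (N - l + 1), (restrΓ (U (k + l)) - restrΓ (U k)) ⬝ᵥ
          diagonal dΓ *ᵥ (restrΓ (U (k + l)) - restrΓ (U k))
      ≤ max 1 β * ((1 + β⁻¹) * (2 * K * (N * τ) + K / 2)) * τ * l := by
  set g : ℕ → ℝ := fun n =>
    2 * K * (1 + β⁻¹) + (μ n ⬝ᵥ LΩ *ᵥ μ n + β⁻¹ * (θ n ⬝ᵥ LΓ *ᵥ θ n)) / 2
  have hg : ∀ n, 0 ≤ g n := fun n => by
    have := hLΩ.dotProduct_mulVec_self_nonneg (μ n)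
    have := hLΓ.dotProduct_mulVec_self_nonneg (θ n)
    positivity
  have hsum : τ * ∑ n ∈ Icc 1 N, g n ≤ (1 + β⁻¹) * (2 * K * (N * τ) + K / 2) := by
    simp only [g, sum_add_distrib, sum_const, Nat.card_Icc, add_tsub_cancel_right, nsmul_eq_mul,
      ← sum_div, ← mul_sum]
    linarith [mul_le_mul_of_nonneg_left hθ (inv_nonneg.2 hβ.le)]
  have hwindow : ∀ k ∈ range (N - l + 1),
      (U (k + l) - U k) ⬝ᵥ diagonal dΩ *ᵥ (U (k + l) - U k)
        + (restrΓ (U (k + l)) - restrΓ (U k)) ⬝ᵥ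
          diagonal dΓ *ᵥ (restrΓ (U (k + l)) - restrΓ (U k))
      ≤ max 1 β * (τ * ∑ i ∈ range l, g (k + i + 1)) := by
    intro k hk
    have hkl : k + l ≤ N := by rw [mem_range] at hk; omega
    refine (add_le_max_one_mul_dotProduct_diagonal_mulVec hβ hdΩ hdΓ _).trans ?_
    gcongr
    refine dotProduct_diagonal_mulVec_translate_le hβ hτ hLΩ hLΓ
      (fun i hi => heq _ (by omega) (by omega)) ?_ ?_
    · linarith [hLΩ.dotProduct_mulVec_sub_le (U (k + l)) (U k), hU _ hkl, hU k (by omega)]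
    · rw [restrΓ_sub]
      linarith [hLΓ.dotProduct_mulVec_sub_le (restrΓ (U (k + l))) (restrΓ (U k)),
        hUΓ _ hkl, hUΓ k (by omega)]
  calc _ = τ * ∑ k ∈ range (N - l + 1),
          ((U (k + l) - U k) ⬝ᵥ diagonal dΩ *ᵥ (U (k + l) - U k)
            + (restrΓ (U (k + l)) - restrΓ (U k)) ⬝ᵥ
              diagonal dΓ *ᵥ (restrΓ (U (k + l)) - restrΓ (U k))) := by
        rw [sum_add_distrib, mul_add]
    _ ≤ τ * ∑ k ∈ range (N - l + 1), max 1 β * (τ * ∑ i ∈ range l, g (k + i + 1)) := by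
        gcongr with k hk; exact hwindow k hk
    _ = max 1 β * τ * (∑ k ∈ range (N - l + 1), ∑ i ∈ range l, g (k + i + 1)) * τ := by
        rw [← mul_sum, ← mul_sum]; ring
    _ ≤ max 1 β * τ * (l • ∑ n ∈ Icc 1 N, g n) * τ := by
        gcongr; exact sum_range_sum_range_add_le hg hlN
    _ = max 1 β * (τ * ∑ n ∈ Icc 1 N, g n) * τ * l := by rw [nsmul_eq_mul]; ring
    _ ≤ _ := by gcongr

end DiscreteScheme

/-- Lemma 5.6 of the paper, matrix formulation: a
Nikolskii-type time-translation estimate for the discrete solutions. The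
constant `C` depends only on `β`, the a priori bound `K` and the final time
`T = N·τ`, and in particular is independent of the translation index `l`, of
the dimensions `nΓ`, `nI` and of the time step `τ`. -/
theorem discrete_nikolskii (β K T : ℝ) (hβ : 0 < β) (hK : 0 ≤ K) (hT : 0 < T) :
    ∃ C : ℝ, 0 < C ∧
      ∀ (nΓ nI N : ℕ) (τ : ℝ), 0 < τ → 1 ≤ N → (N : ℝ) * τ = T →
      ∀ (dΩ : Fin nΓ ⊕ Fin nI → ℝ), (∀ i, 0 < dΩ i) →
      ∀ (dΓ : Fin nΓ → ℝ), (∀ i, 0 < dΓ i) →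
      ∀ (LΩ : Matrix (Fin nΓ ⊕ Fin nI) (Fin nΓ ⊕ Fin nI) ℝ), LΩ.PosSemidef →
      ∀ (LΓ : Matrix (Fin nΓ) (Fin nΓ) ℝ), LΓ.PosSemidef →
      ∀ (U μ : ℕ → (Fin nΓ ⊕ Fin nI → ℝ)) (θ : ℕ → (Fin nΓ → ℝ)),
      -- the combined discrete evolution equation, for n = 1, …, N
      (∀ n, 1 ≤ n → n ≤ N →
        (Matrix.diagonal dΩ).mulVec (U n - U (n - 1))
          + β⁻¹ • extΩ ((Matrix.diagonal dΓ).mulVec (restrΓ (U n) - restrΓ (U (n - 1))))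
          + τ • LΩ.mulVec (μ n) + (τ * β⁻¹) • extΩ (LΓ.mulVec (θ n)) = 0) →
      -- uniform a priori bounds
      (∀ n, n ≤ N → U n ⬝ᵥ LΩ.mulVec (U n) ≤ K) →
      (∀ n, n ≤ N → restrΓ (U n) ⬝ᵥ LΓ.mulVec (restrΓ (U n)) ≤ K) →
      τ * ∑ n ∈ Finset.Icc 1 N, μ n ⬝ᵥ LΩ.mulVec (μ n) ≤ K →
      τ * ∑ n ∈ Finset.Icc 1 N, θ n ⬝ᵥ LΓ.mulVec (θ n) ≤ K →
      -- the Nikolskii-type estimate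
      ∀ l, 1 ≤ l → l ≤ N →
        τ * ∑ k ∈ Finset.range (N - l + 1),
            (U (k + l) - U k) ⬝ᵥ (Matrix.diagonal dΩ).mulVec (U (k + l) - U k)
          + τ * ∑ k ∈ Finset.range (N - l + 1),
              (restrΓ (U (k + l)) - restrΓ (U k)) ⬝ᵥ
                (Matrix.diagonal dΓ).mulVec (restrΓ (U (k + l)) - restrΓ (U k))
          ≤ C * τ * (l : ℝ) := by
  refine ⟨max 1 β * ((1 + β⁻¹) * (2 * K * T + K / 2)) + 1, by positivity, ?_⟩
  intro nΓ nI N τ hτ _ hNτ dΩ hdΩ dΓ hdΓ LΩ hLΩ LΓ hLΓ U μ θ heq hU hUΓ hμ hθ l _ hlN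
  subst hNτ
  have heq' : ∀ n, 1 ≤ n → n ≤ N → diagonal (dΩ + β⁻¹ • extΩ dΓ) *ᵥ (U n - U (n - 1))
      + τ • (LΩ *ᵥ μ n + β⁻¹ • extΩ (LΓ *ᵥ θ n)) = 0 := fun n h1 h2 =>
    (diagonal_mulVec_add_smul_extΩ_add_smul _ _ _ _ _ _ _ _ _).symm.trans (heq n h1 h2)
  refine (sum_translate_mass_le hβ hτ.le hK (fun i => (hdΩ i).le) (fun i => (hdΓ i).le) hLΩ hLΓ heq'
    hU hUΓ hμ hθ hlN).trans ?_
  gcongr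
  exact le_add_of_nonneg_right zero_le_one
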